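/- arXiv:0809.1709 — 10 statements merged into one kernel-verified Lean document; each statement's English description precedes it below -/
import Mathlib

section
/- If a piecewise syndetic subset of ℤ is partitioned into finitely many cells, then at least one cell is piecewise syndetic. -/
/-- `T ⊆ ℤ` contains arbitrarily long intervals. -/
def ThickZ (T : Set ℤ) : Prop :=
  ∀ L : ℕ, ∃ a : ℤ, ∀ i : ℤ, a ≤ i → i < a + L → i ∈ T

/-- `S ⊆ ℤ` is piecewise syndetic: some `⋃_{t=1}^r (S - t)` is thick. -/
def PWSynZ (S : Set ℤ) : Prop :=
  ∃ r : ℕ, 0 < r ∧ ThickZ {x : ℤ | ∃ t : ℤ, 1 ≤ t ∧ t ≤ (r : ℤ) ∧ x + t ∈ S}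

lemma pws_union {A B : Set ℤ} (h : PWSynZ (A ∪ B)) : PWSynZ A ∨ PWSynZ B := by
  by_cases hA : PWSynZ A
  · exact Or.inl hA
  right
  obtain ⟨r, hr, hthick⟩ := h
  have hnA : ¬ ThickZ {x : ℤ | ∃ t : ℤ, 1 ≤ t ∧ t ≤ (r : ℤ) ∧ x + t ∈ A} := by
    intro h'; exact hA ⟨r, hr, h'⟩
  rw [ThickZ] at hnA
  push_neg at hnA
  obtain ⟨ℓ, hℓ⟩ := hnA
  refine ⟨r + ℓ, by omega, ?_⟩
  intro L
  obtain ⟨a, ha⟩ := hthick (L + ℓ)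
  refine ⟨a, ?_⟩
  intro x hx1 hx2
  obtain ⟨y, hy1, hy2, hy3⟩ := hℓ x
  obtain ⟨t, ht1, ht2, ht3⟩ := ha y (by omega) (by push_cast; omega)
  have htB : y + t ∈ B := by
    cases ht3 with
    | inl hmem => exact absurd ⟨t, ht1, ht2, hmem⟩ hy3
    | inr hmem => exact hmem
  refine ⟨(y - x) + t, by omega, by push_cast; omega, ?_⟩
  rwa [show x + ((y - x) + t) = y + t by ring]

/-- If a piecewise syndetic subset of ℤ is partitioned into finitely many cells,
one cell is piecewise syndetic. -/
theorem pwSyn_of_partition (S : Set ℤ) (hS : PWSynZ S) (m : ℕ) (C : Fin m → Set ℤ)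
    (hcover : S = ⋃ j, C j) : ∃ j, PWSynZ (C j) := by
  induction m generalizing S with
  | zero =>
    exfalso
    obtain ⟨r, hr, hthick⟩ := hS
    obtain ⟨a, ha⟩ := hthick 1
    obtain ⟨t, _, _, htS⟩ := ha a (le_refl a) (by omega)
    rw [hcover] at htS
    simp only [Set.mem_iUnion] at htS
    exact htS.choose.elim0
  | succ m ih =>
    have hsplit : S = C 0 ∪ ⋃ j : Fin m, C j.succ := by
      rw [hcover]; ext x
      simp only [Set.mem_iUnion, Set.mem_union]
      constructor
      · rintro ⟨j, hj⟩
        rcases Fin.eq_zero_or_eq_succ j with h | ⟨k, rfl⟩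
        · subst h; exact Or.inl hj
        · exact Or.inr ⟨k, hj⟩
      · rintro (h | ⟨k, hk⟩)
        · exact ⟨0, h⟩
        · exact ⟨k.succ, hk⟩
    rw [hsplit] at hS
    rcases pws_union hS with h | h
    · exact ⟨0, h⟩
    · obtain ⟨j, hj⟩ := ih _ h (fun j => C j.succ) rfl
      exact ⟨j.succ, hj⟩
end

section
/- Every piecewise syndetic subset of ℤ contains arbitrarily long arithmetic progressions: for every k ∈ ℕ there exist a ∈ ℤ and d ∈ ℤ, d ≠ 0, such that a, a+d, ..., a+kd all lie in S. -/
open Combinatorics in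
/-- A finitary van der Waerden theorem with control of the location of the AP,
derived from the Hales–Jewett theorem. -/
lemma vdw_fin (k r : ℕ) : ∃ N : ℕ, ∀ C : ℤ → Fin (r + 1), ∀ a : ℤ,
    ∃ b d : ℤ, 1 ≤ d ∧ (∀ i : ℕ, i ≤ k → a ≤ b + (i : ℤ) * d ∧ b + (i : ℤ) * d < a + N) ∧
      ∃ c, ∀ i : ℕ, i ≤ k → C (b + (i : ℤ) * d) = c := by
  classical
  obtain ⟨ι, _inst, hι⟩ := Line.exists_mono_in_high_dimension (Fin (k + 1)) (Fin (r + 1))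
  refine ⟨Fintype.card ι * k + 1, fun C a => ?_⟩
  obtain ⟨l, c, hl⟩ := hι (fun v => C (a + ∑ i, ((v i : ℕ) : ℤ)))
  set s : Finset ι := Finset.univ.filter (fun i => l.idxFun i = none) with hs
  have hs_card : 0 < s.card := Finset.card_pos.mpr ⟨l.proper.choose, by
    rw [hs, Finset.mem_filter]; exact ⟨Finset.mem_univ _, l.proper.choose_spec⟩⟩
  set B : ℤ := ∑ i ∈ sᶜ, (((l.idxFun i).map (fun m : Fin (k + 1) => ((m : ℕ) : ℤ))).getD 0)
    with hB
  have key : ∀ x : Fin (k + 1), ∑ i, ((l x i : ℕ) : ℤ) = (s.card : ℤ) * ((x : ℕ) : ℤ) + B := by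
    intro x
    rw [← Finset.sum_add_sum_compl s, hB]
    congr 1
    · rw [Finset.sum_congr rfl (fun i hi => ?_), Finset.sum_const, nsmul_eq_mul]
      have : l.idxFun i = none := (Finset.mem_filter.mp hi).2
      rw [l.apply_none _ _ this]
    · refine Finset.sum_congr rfl (fun i hi => ?_)
      have : l.idxFun i ≠ none := by
        intro h
        exact (Finset.mem_compl.mp hi) (Finset.mem_filter.mpr ⟨Finset.mem_univ _, h⟩)
      obtain ⟨m, hm⟩ := Option.ne_none_iff_exists'.mp this
      rw [l.apply_some hm, hm]
      rfl
  refine ⟨a + B, (s.card : ℤ), by exact_mod_cast hs_card, ?_, c, ?_⟩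
  · intro i hi
    set x : Fin (k + 1) := ⟨i, by omega⟩ with hx
    have hsum := key x
    have hval : a + B + (i : ℤ) * (s.card : ℤ) = a + ∑ j, ((l x j : ℕ) : ℤ) := by
      rw [hsum]; push_cast [hx]; ring
    have h0 : (0 : ℤ) ≤ ∑ j, ((l x j : ℕ) : ℤ) :=
      Finset.sum_nonneg fun j _ => Int.ofNat_nonneg _
    have h1 : ∑ j, ((l x j : ℕ) : ℤ) ≤ (Fintype.card ι : ℤ) * k := by
      calc ∑ j, ((l x j : ℕ) : ℤ) ≤ ∑ _j : ι, (k : ℤ) :=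
            Finset.sum_le_sum fun j _ => by exact_mod_cast (Fin.is_le (l x j))
        _ = (Fintype.card ι : ℤ) * k := by
            rw [Finset.sum_const, nsmul_eq_mul, Finset.card_univ]
    constructor
    · rw [hval]; linarith
    · rw [hval]; push_cast; linarith
  · intro i hi
    set x : Fin (k + 1) := ⟨i, by omega⟩ with hx
    have hsum := key x
    have hval : a + B + (i : ℤ) * (s.card : ℤ) = a + ∑ j, ((l x j : ℕ) : ℤ) := by
      rw [hsum]; push_cast [hx]; ring
    rw [hval, ← hl x]

/-- Every piecewise syndetic subset of ℤ contains arbitrarily long arithmetic progressions. -/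
theorem pwSyn_contains_arbitrarily_long_APs (S : Set ℤ) (hS : PWSynZ S) (k : ℕ) :
    ∃ a d : ℤ, d ≠ 0 ∧ ∀ i : ℕ, i ≤ k → a + (i : ℤ) * d ∈ S := by
  obtain ⟨r, hr, hT⟩ := hS
  set T : Set ℤ := {x : ℤ | ∃ t : ℤ, 1 ≤ t ∧ t ≤ (r : ℤ) ∧ x + t ∈ S} with hTdef
  obtain ⟨r', rfl⟩ : ∃ r', r = r' + 1 := ⟨r - 1, by omega⟩
  obtain ⟨N, hN⟩ := vdw_fin k r'
  obtain ⟨a0, ha0⟩ := hT N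
  classical
  set C : ℤ → Fin (r' + 1) := fun x =>
    if h : x ∈ T then ⟨(Classical.choose h).toNat - 1, by
      obtain ⟨h1, h2, _⟩ := Classical.choose_spec h
      omega⟩ else 0 with hC
  obtain ⟨b, d, hd, hbound, c, hc⟩ := hN C a0
  refine ⟨b + ((c : ℕ) : ℤ) + 1, d, by omega, ?_⟩
  intro i hi
  have hmem : b + (i : ℤ) * d ∈ T := by
    obtain ⟨h1, h2⟩ := hbound i hi
    exact ha0 _ h1 h2
  have hcol := hc i hi
  rw [hC] at hcol
  simp only [hmem, dif_pos] at hcol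
  obtain ⟨h1, h2, h3⟩ := Classical.choose_spec hmem
  have : Classical.choose hmem = ((c : ℕ) : ℤ) + 1 := by
    have := congrArg Fin.val hcol
    simp at this
    omega
  rw [this] at h3
  have : b + ((c : ℕ) : ℤ) + 1 + (i : ℤ) * d = b + (i : ℤ) * d + (((c : ℕ) : ℤ) + 1) := by ring
  rw [this]
  exact h3
end

section
/- If M ⊆ ℤ² is piecewise syndetic and x, y ∈ ℤ, z ∈ ℤ \ {0}, then the set {(A₁ + x·A₂ + y, z·A₂) : (A₁, A₂) ∈ M} is piecewise syndetic in ℤ². -/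
/-- A subset of an abelian group is thick if it contains a translate of every finite set. -/
def Thick {G : Type*} [AddCommGroup G] (T : Set G) : Prop :=
  ∀ F : Finset G, ∃ g : G, ∀ f ∈ F, g + f ∈ T

/-- A subset is piecewise syndetic if a finite union of its translates is thick. -/
def PWSyn {G : Type*} [AddCommGroup G] (S : Set G) : Prop :=
  ∃ F : Finset G, Thick {x : G | ∃ t ∈ F, x + t ∈ S}

/-!
The map is the homomorphism `φ (a₁, a₂) = (a₁ + x a₂, z a₂)` followed by translation by
`(y, 0)`, and `φ` has range `ℤ × zℤ`, of index `|z|`. Translations clearly preserve piecewise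
syndeticity. So do homomorphisms `φ : G →+ H` of finite-index range: if `R` is a finite set
with `H = range φ - R`, pull a finite `E ⊆ H` back to `G` by choosing, for each `e`, a
preimage of `e + r_e` with `r_e ∈ R`; a shift witnessing thickness in `G` then pushes forward,
with the finite set of shifts `F` enlarged to `φ F + R`.
-/

open Pointwise

section

variable {G H : Type*} [AddCommGroup G] [AddCommGroup H]

theorem PWSyn.vadd {S : Set G} (hS : PWSyn S) (v : G) : PWSyn (v +ᵥ S) := by
  obtain ⟨F, hF⟩ := hS
  refine ⟨F, fun E => ?_⟩
  obtain ⟨g, hg⟩ := hF E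
  refine ⟨g + v, fun e he => ?_⟩
  obtain ⟨t, htF, ht⟩ := hg e he
  exact ⟨t, htF, g + e + t, ht, by simp only [vadd_eq_add]; abel⟩

theorem AddSubgroup.exists_finset_forall_add_mem (K : AddSubgroup H) [K.FiniteIndex] :
    ∃ R : Finset H, ∀ h, ∃ r ∈ R, h + r ∈ K := by
  classical
  have := Fintype.ofFinite (H ⧸ K)
  refine ⟨Finset.univ.image fun q : H ⧸ K => -q.out, fun h => ?_⟩
  obtain ⟨k, hk⟩ := QuotientAddGroup.mk_out_eq_add K h
  refine ⟨-(h : H ⧸ K).out, Finset.mem_image_of_mem _ (Finset.mem_univ _), ?_⟩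
  rw [hk, neg_add, add_neg_cancel_left]
  exact K.neg_mem k.2

theorem PWSyn.image_of_finiteIndex (φ : G →+ H) [φ.range.FiniteIndex] {S : Set G}
    (hS : PWSyn S) : PWSyn (φ '' S) := by
  classical
  obtain ⟨F, hF⟩ := hS
  obtain ⟨R, hR⟩ := φ.range.exists_finset_forall_add_mem
  choose! r hrR ψ hψ using hR
  refine ⟨(F ×ˢ R).image fun tr => φ tr.1 + tr.2, fun E => ?_⟩
  obtain ⟨g, hg⟩ := hF (E.image ψ)
  refine ⟨φ g, fun e he => ?_⟩
  obtain ⟨t, htF, ht⟩ := hg (ψ e) (Finset.mem_image_of_mem ψ he)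
  have hshift : φ t + r e ∈ (F ×ˢ R).image fun tr => φ tr.1 + tr.2 :=
    Finset.mem_image.mpr ⟨(t, r e), Finset.mem_product.mpr ⟨htF, hrR e⟩, rfl⟩
  refine ⟨φ t + r e, hshift, g + ψ e + t, ht, ?_⟩
  rw [map_add, map_add, hψ]
  abel

end

def shearScale (x z : ℤ) : ℤ × ℤ →+ ℤ × ℤ :=
  AddMonoidHom.mk' (fun a => (a.1 + x * a.2, z * a.2)) fun a b => by
    ext <;> simp only [Prod.fst_add, Prod.snd_add] <;> ring

theorem finiteIndex_range_shearScale (x : ℤ) {z : ℤ} (hz : z ≠ 0) :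
    (shearScale x z).range.FiniteIndex := by
  have : (AddSubgroup.zmultiples z).FiniteIndex :=
    ⟨by simpa [Int.index_zmultiples] using hz⟩
  refine AddSubgroup.finiteIndex_of_le (H := (⊤ : AddSubgroup ℤ).prod (.zmultiples z)) ?_
  rintro ⟨a, b⟩ ⟨-, k, rfl : k • z = b⟩
  exact ⟨(a - x * k, k), by ext <;> simp [shearScale, mul_comm]⟩

/-- The affine-map lemma: if M ⊆ ℤ² is piecewise syndetic, so is its image under
(A₁, A₂) ↦ (A₁ + x·A₂ + y, z·A₂) for z ≠ 0. -/
theorem pwSyn_affine_image (M : Set (ℤ × ℤ)) (hM : PWSyn M) (x y z : ℤ) (hz : z ≠ 0) :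
    PWSyn {p : ℤ × ℤ | ∃ q ∈ M, p = (q.1 + x * q.2 + y, z * q.2)} := by
  have := finiteIndex_range_shearScale x hz
  convert (hM.image_of_finiteIndex (shearScale x z)).vadd (y, 0) using 1
  ext p
  simp only [Set.mem_ofPred, Set.mem_vadd_set, Set.mem_image, exists_exists_and_eq_and]
  refine exists_congr fun q => and_congr_right fun _ => ?_
  rw [eq_comm]
  simp only [shearScale, AddMonoidHom.mk'_apply, vadd_eq_add, Prod.mk_add_mk, zero_add]
  rw [add_comm y]
end

section
/- Let S ⊆ ℤ and r, K ∈ ℕ, and suppose ⋃_{t=1}^r (S - t) is thick in ℤ (contains arbitrarily long intervals). Then the set B := {(A, D) ∈ ℤ² : A + iD ∈ ⋃_{t=1}^r (S - t) for all i = 0, 1, ..., K} is thick in ℤ². -/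
/-!
Translating a pair `(A, D)` by `(g, 0)` translates every term `A + i • D` of its progression by `g`.
So a translate of the finitely many terms of the progressions of a finite set of pairs inside a
thick set `T` yields a translate of those pairs all of whose progressions lie in `T`.
-/

theorem Thick.mono {G : Type*} [AddCommGroup G] {T T' : Set G} (hT : Thick T) (h : T ⊆ T') :
    Thick T' :=
  fun F ↦ (hT F).imp fun _ hg f hf ↦ h (hg f hf)

theorem Int.thick_of_forall_exists_Ico {T : Set ℤ}
    (hT : ∀ L : ℕ, ∃ a : ℤ, ∀ i : ℤ, a ≤ i → i < a + L → i ∈ T) : Thick T := by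
  intro F
  set M := F.sup Int.natAbs
  obtain ⟨a, ha⟩ := hT (2 * M + 1)
  refine ⟨a + M, fun f hf ↦ ha _ ?_ ?_⟩ <;>
  · have hfM : f.natAbs ≤ M := Finset.le_sup hf
    omega

theorem Thick.progressionPairs {G : Type*} [AddCommGroup G] {T : Set G} (hT : Thick T)
    (s : Finset ℕ) : Thick {p : G × G | ∀ i ∈ s, p.1 + i • p.2 ∈ T} := by
  classical
  intro F
  obtain ⟨g, hg⟩ := hT ((F ×ˢ s).image fun q ↦ q.1.1 + q.2 • q.1.2)
  refine ⟨(g, 0), fun f hf i hi ↦ ?_⟩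
  simpa [add_assoc] using hg _ (Finset.mem_image_of_mem _ (Finset.mk_mem_product hf hi))

/-- If the union of S - t, t = 1..r, is thick in ℤ then the set of pairs (A, D) whose whole
progression A, A+D, ..., A+KD lies in that union is thick in ℤ². -/
theorem progressionPairs_thick (S : Set ℤ) (r K : ℕ)
    (hthick : ∀ L : ℕ, ∃ a : ℤ, ∀ i : ℤ, a ≤ i → i < a + L →
      ∃ t : ℤ, 1 ≤ t ∧ t ≤ (r : ℤ) ∧ i + t ∈ S) :
    Thick {p : ℤ × ℤ | ∀ i : ℕ, i ≤ K →
      ∃ t : ℤ, 1 ≤ t ∧ t ≤ (r : ℤ) ∧ (p.1 + (i : ℤ) * p.2) + t ∈ S} := by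
  refine ((Int.thick_of_forall_exists_Ico hthick).progressionPairs (Finset.range (K + 1))).mono ?_
  intro p hp i hi
  have hpi := hp i (Finset.mem_range_succ_iff.mpr hi)
  rw [nsmul_eq_mul] at hpi
  exact hpi
end

section
/- If a thick subset of ℤ² is partitioned into finitely many cells, then at least one cell is piecewise syndetic in ℤ². -/
open Pointwise in
/-- Key lemma: if a thick set is contained in `A ∪ B` and `A` is not piecewise
syndetic, then `B` is thick. -/
lemma thick_of_not_pwSyn {G : Type*} [AddCommGroup G] [DecidableEq G]
    {T A B : Set G} (hT : Thick T) (hsub : T ⊆ A ∪ B) (hA : ¬ PWSyn A) : Thick B := by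
  intro F
  rw [PWSyn] at hA
  push_neg at hA
  have hnt := hA F
  rw [Thick] at hnt
  push_neg at hnt
  obtain ⟨E, hE⟩ := hnt
  obtain ⟨g, hg⟩ := hT (E + F)
  obtain ⟨e, heE, he⟩ := hE g
  refine ⟨g + e, fun f hf => ?_⟩
  have hmem : g + (e + f) ∈ T := hg _ (Finset.add_mem_add heE hf)
  have hnotA : g + e + f ∉ A := by
    simp only [Set.mem_setOf_eq] at he
    push_neg at he
    exact he f hf
  rcases hsub hmem with h | h
  · exact absurd (by rwa [add_assoc]) hnotA
  · rwa [add_assoc]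

/-- If a thick subset of ℤ² is partitioned into finitely many cells, one cell is
piecewise syndetic. -/
theorem pwSyn_of_thick_partition (T : Set (ℤ × ℤ)) (hT : Thick T) (m : ℕ)
    (C : Fin m → Set (ℤ × ℤ)) (hcover : T = ⋃ j, C j) : ∃ j, PWSyn (C j) := by
  induction m generalizing T with
  | zero =>
    exfalso
    obtain ⟨g, hg⟩ := hT {0}
    have := hg 0 (Finset.mem_singleton_self 0)
    rw [hcover] at this
    simpa using this
  | succ n ih =>
    by_cases hA : PWSyn (C 0)
    · exact ⟨0, hA⟩
    · have hsub : T ⊆ C 0 ∪ ⋃ j : Fin n, C j.succ := by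
        rw [hcover]
        intro x hx
        obtain ⟨j, hj⟩ := Set.mem_iUnion.1 hx
        rcases Fin.eq_zero_or_eq_succ j with rfl | ⟨k, rfl⟩
        · exact Or.inl hj
        · exact Or.inr (Set.mem_iUnion.2 ⟨k, hj⟩)
      have hB : Thick (⋃ j : Fin n, C j.succ) := thick_of_not_pwSyn hT hsub hA
      obtain ⟨j, hj⟩ := ih _ hB (fun j => C j.succ) rfl
      exact ⟨j.succ, hj⟩
end

section
/- For every k ∈ ℕ and every piecewise syndetic set S ⊆ ℤ, the set {(a, d) ∈ ℤ² : a, a+d, ..., a+kd ∈ S} is piecewise syndetic in ℤ². -/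
open Filter Set

attribute [local instance] Ultrafilter.add Ultrafilter.addSemigroup

namespace FGaux

theorem mem_add {α : Type*} [AddSemigroup α] {A : Set α} {p q : Ultrafilter α} :
    A ∈ p + q ↔ {x : α | {y : α | x + y ∈ A} ∈ q} ∈ p := Iff.rfl

theorem map_add_hom {α β : Type*} [AddSemigroup α] [AddSemigroup β] (f : α → β)
    (hf : ∀ a b, f (a + b) = f a + f b) (p q : Ultrafilter α) :
    Ultrafilter.map f (p + q) = Ultrafilter.map f p + Ultrafilter.map f q := by
  refine Ultrafilter.coe_inj.1 (Filter.ext fun s => ?_)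
  rw [Ultrafilter.mem_coe, Ultrafilter.mem_coe, Ultrafilter.mem_map, mem_add, mem_add,
    Ultrafilter.mem_map]
  have h2 : (f ⁻¹' {a | {b | a + b ∈ s} ∈ Ultrafilter.map f q})
      = {x | {y | x + y ∈ f ⁻¹' s} ∈ q} := by
    ext x
    simp only [Set.mem_preimage, Set.mem_setOf_eq, Ultrafilter.mem_map]
    have : (f ⁻¹' {b | f x + b ∈ s}) = {y | x + y ∈ f ⁻¹' s} := by
      ext y; simp [hf]
    rw [this]
    exact Iff.rfl
  rw [h2]

theorem map_eq_of_forall {α β : Type*} (f : α → β) (r : Ultrafilter α) (e : Ultrafilter β)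
    (h : ∀ s ∈ e, f ⁻¹' s ∈ r) : Ultrafilter.map f r = e := by
  refine Ultrafilter.coe_le_coe.1 ?_
  intro s hs
  rw [Ultrafilter.mem_coe, Ultrafilter.mem_map]
  exact h s hs

variable {G : Type*} [AddCommGroup G]

/-- A minimal (closed) left ideal in the ultrafilter semigroup. -/
def MinIdeal (M : Set (Ultrafilter G)) : Prop :=
  M.Nonempty ∧ IsClosed M ∧ ∀ q ∈ M, Set.range (· + q) = M

theorem MinIdeal.ideal {M : Set (Ultrafilter G)} (hM : MinIdeal M) {p : Ultrafilter G}
    (hp : p ∈ M) (r : Ultrafilter G) : r + p ∈ M := by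
  rw [← hM.2.2 p hp]; exact ⟨r, rfl⟩

theorem exists_minIdeal (C : Set (Ultrafilter G)) (hne : C.Nonempty) (hcl : IsClosed C)
    (hid : ∀ r : Ultrafilter G, ∀ p ∈ C, r + p ∈ C) : ∃ M, M ⊆ C ∧ MinIdeal M := by
  let 𝒮 : Set (Set (Ultrafilter G)) :=
    {D | D.Nonempty ∧ IsClosed D ∧ ∀ r : Ultrafilter G, ∀ p ∈ D, r + p ∈ D}
  have hzorn : ∀ c ⊆ 𝒮, IsChain (· ⊆ ·) c → c.Nonempty →
      ∃ lb ∈ 𝒮, ∀ s ∈ c, lb ⊆ s := by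
    intro c hc hchain hcne
    have hdir : DirectedOn (· ⊇ ·) c := by
      intro U hU V hV
      rcases eq_or_ne U V with rfl | hne'
      · exact ⟨U, hU, subset_rfl, subset_rfl⟩
      · rcases hchain hU hV hne' with h | h
        · exact ⟨U, hU, subset_rfl, h⟩
        · exact ⟨V, hV, h, subset_rfl⟩
    haveI : Nonempty c := hcne.to_subtype
    have h1 : (⋂₀ c).Nonempty :=
      IsCompact.nonempty_sInter_of_directed_nonempty_isCompact_isClosed hdir
        (fun U hU => (hc hU).1) (fun U hU => (hc hU).2.1.isCompact)
        (fun U hU => (hc hU).2.1)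
    refine ⟨⋂₀ c, ⟨h1, isClosed_sInter fun U hU => (hc hU).2.1, ?_⟩,
      fun s hs => Set.sInter_subset_of_mem hs⟩
    intro r p hp
    exact Set.mem_sInter.2 fun U hU => (hc hU).2.2 r p (Set.mem_sInter.1 hp U hU)
  obtain ⟨M, hMC, hMmin⟩ := zorn_superset_nonempty 𝒮 hzorn C ⟨hne, hcl, hid⟩
  refine ⟨M, hMC, hMmin.prop.1, hMmin.prop.2.1, fun q hq => ?_⟩
  have hR : Set.range (· + q) ∈ 𝒮 := by
    refine ⟨⟨q + q, ⟨q, rfl⟩⟩, ?_, ?_⟩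
    · rw [← Set.image_univ]
      exact (isCompact_univ.image (Ultrafilter.continuous_add_left q)).isClosed
    · rintro r _ ⟨s, rfl⟩
      exact ⟨r + s, add_assoc r s q⟩
  have hRM : Set.range (· + q) ⊆ M := by
    rintro _ ⟨s, rfl⟩
    exact hMmin.prop.2.2 s q hq
  exact Set.Subset.antisymm hRM (hMmin.2 hR hRM)

theorem MinIdeal.exists_idem {M : Set (Ultrafilter G)} (hM : MinIdeal M) :
    ∃ e ∈ M, e + e = e :=
  exists_idempotent_in_compact_add_subsemigroup Ultrafilter.continuous_add_left M hM.1
    hM.2.1.isCompact (fun x hx y hy => by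
      have := hM.ideal hy x
      exact this)

theorem pws_of_min {M : Set (Ultrafilter G)} (hM : MinIdeal M) {q : Ultrafilter G}
    (hq : q ∈ M) {A : Set G} (hA : A ∈ q) : PWSyn A := by
  have step1 : ∀ r ∈ M, ∃ x : G, {y : G | x + y ∈ A} ∈ r := by
    intro r hr
    have h : q ∈ Set.range (· + r) := by rw [hM.2.2 r hr]; exact hq
    obtain ⟨s, hs⟩ := h
    have hs' : s + r = q := hs
    have : A ∈ s + r := by rw [hs']; exact hA
    exact Ultrafilter.nonempty_of_mem (mem_add.1 this)
  have step2 : ∃ F : Finset G, M ⊆ ⋃ x ∈ F, {p : Ultrafilter G | {y : G | x + y ∈ A} ∈ p} := by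
    have hMc : IsCompact M := hM.2.1.isCompact
    have hcov : M ⊆ ⋃ x : G, {p : Ultrafilter G | {y : G | x + y ∈ A} ∈ p} := by
      intro r hr
      obtain ⟨x, hx⟩ := step1 r hr
      exact Set.mem_iUnion.2 ⟨x, hx⟩
    exact hMc.elim_finite_subcover _ (fun x => ultrafilter_isOpen_basic _) hcov
  obtain ⟨F, hF⟩ := step2
  have step3 : ∀ y : G, ∃ x ∈ F, {z : G | x + y + z ∈ A} ∈ q := by
    intro y
    have hyq : pure y + q ∈ M := hM.ideal hq (pure y)
    obtain ⟨x, hxF, hx⟩ := Set.mem_iUnion₂.1 (hF hyq)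
    refine ⟨x, hxF, ?_⟩
    have hx' : {w : G | x + w ∈ A} ∈ pure y + q := hx
    have h2 := mem_add.1 hx'
    rw [Ultrafilter.mem_pure] at h2
    have h3 : {z : G | x + y + z ∈ A} = {b : G | y + b ∈ {w : G | x + w ∈ A}} := by
      ext z; simp only [Set.mem_setOf_eq]; rw [add_assoc]
    rw [h3]
    exact h2
  choose xf hxfF hxfq using step3
  refine ⟨F, fun E => ?_⟩
  have hB : (⋂ f ∈ E, {z : G | xf f + f + z ∈ A}) ∈ q := by
    rw [← Ultrafilter.mem_coe]
    exact (Filter.biInter_finset_mem E).2 fun f _ => hxfq f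
  obtain ⟨g, hg⟩ := Ultrafilter.nonempty_of_mem hB
  refine ⟨g, fun f hf => ?_⟩
  refine ⟨xf f, hxfF f, ?_⟩
  have hgf : xf f + f + g ∈ A := Set.mem_iInter₂.1 hg f hf
  have heq : g + f + xf f = xf f + f + g := by abel
  rw [heq]
  exact hgf

theorem exists_min_idem_of_pwsyn {S : Set G} (hS : PWSyn S) :
    ∃ M : Set (Ultrafilter G), MinIdeal M ∧
      ∃ e ∈ M, e + e = e ∧ ∃ x : G, {y : G | x + y ∈ S} ∈ e := by
  classical
  obtain ⟨F, hF⟩ := hS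
  set T : Set G := {x | ∃ t ∈ F, x + t ∈ S} with hT
  have hq1 : ∃ q1 : Ultrafilter G, ∀ x : G, {y : G | x + y ∈ T} ∈ q1 := by
    have cond : ∀ T' : Finset (Set G),
        (↑T' : Set (Set G)) ⊆ ((fun x : G => {y : G | x + y ∈ T}) '' Set.univ) →
        (⋂₀ (↑T' : Set (Set G))).Nonempty := by
      intro T' hT'
      have hchoice : ∀ s ∈ T', ∃ x : G, s = {y : G | x + y ∈ T} := by
        intro s hs
        obtain ⟨x, _, rfl⟩ := hT' hs
        exact ⟨x, rfl⟩
      choose! φ hφ using hchoice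
      obtain ⟨g, hg⟩ := hF (T'.image φ)
      refine ⟨g, Set.mem_sInter.2 fun s hs => ?_⟩
      rw [hφ s hs]
      have h2 := hg (φ s) (Finset.mem_image_of_mem φ hs)
      show φ s + g ∈ T
      rwa [add_comm] at h2
    obtain ⟨q1, hq1⟩ := Ultrafilter.exists_ultrafilter_of_finite_inter_nonempty
      ((fun x : G => {y : G | x + y ∈ T}) '' Set.univ) cond
    exact ⟨q1, fun x => hq1 (Set.mem_image_of_mem _ (Set.mem_univ x))⟩
  obtain ⟨q1, hq1⟩ := hq1
  have hCid : ∀ r : Ultrafilter G, ∀ p ∈ Set.range (· + q1), r + p ∈ Set.range (· + q1) := by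
    rintro r _ ⟨s, rfl⟩; exact ⟨r + s, add_assoc r s q1⟩
  have hCcl : IsClosed (Set.range (· + q1)) := by
    rw [← Set.image_univ]
    exact (isCompact_univ.image (Ultrafilter.continuous_add_left q1)).isClosed
  obtain ⟨M, hMC, hM⟩ := exists_minIdeal (Set.range (· + q1)) ⟨q1 + q1, ⟨q1, rfl⟩⟩ hCcl hCid
  have hTmem : ∀ p ∈ M, T ∈ p := by
    intro p hp
    obtain ⟨s, hs⟩ := hMC hp
    have hs' : s + q1 = p := hs
    rw [← hs']
    refine mem_add.2 ?_
    have huniv : {x : G | {y : G | x + y ∈ T} ∈ q1} = Set.univ :=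
      Set.eq_univ_of_forall fun x => hq1 x
    rw [huniv, ← Ultrafilter.mem_coe]
    exact Filter.univ_mem
  obtain ⟨q, hqM⟩ := hM.1
  have hTq : T ∈ q := hTmem q hqM
  have hsplit : ∃ t ∈ F, {x : G | x + t ∈ S} ∈ q := by
    have hUnion : T = ⋃ t ∈ (F : Set G), {x : G | x + t ∈ S} := by
      ext z; simp [hT]
    rw [hUnion] at hTq
    exact (Ultrafilter.finite_biUnion_mem_iff F.finite_toSet).1 hTq
  obtain ⟨t, htF, htq⟩ := hsplit
  have hpM : pure t + q ∈ M := hM.ideal hqM (pure t)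
  have hSp : S ∈ pure t + q := by
    rw [mem_add, Ultrafilter.mem_pure]
    have : {b : G | t + b ∈ S} = {x : G | x + t ∈ S} := by
      ext b; simp [add_comm]
    show {b : G | t + b ∈ S} ∈ q
    rw [this]
    exact htq
  obtain ⟨e, heM, hee⟩ := hM.exists_idem
  have hpe : pure t + q + e = pure t + q := by
    have h : pure t + q ∈ Set.range (· + e) := by rw [hM.2.2 e heM]; exact hpM
    obtain ⟨s, hs⟩ := h
    have hs' : s + e = pure t + q := hs
    rw [← hs', add_assoc, hee]
  have hSpe : S ∈ (pure t + q) + e := by rw [hpe]; exact hSp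
  obtain ⟨x, hx⟩ := Ultrafilter.nonempty_of_mem (mem_add.1 hSpe)
  exact ⟨M, hM, e, heM, hee, x, hx⟩

end FGaux

/-- Furstenberg–Glasner: for every k and every piecewise syndetic S ⊆ ℤ, the set of
pairs (a, d) with a, a+d, ..., a+kd ∈ S is piecewise syndetic in ℤ². -/
theorem furstenberg_glasner (k : ℕ) (S : Set ℤ) (hS : PWSyn S) :
    PWSyn {p : ℤ × ℤ | ∀ i : ℕ, i ≤ k → p.1 + (i : ℤ) * p.2 ∈ S} := by
  classical
  obtain ⟨M1, hM1, e, heM1, hee, x, hxe⟩ := FGaux.exists_min_idem_of_pwsyn hS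
  set S' : Set ℤ := {y | x + y ∈ S} with hS'
  set φ : ℕ → ℤ × ℤ → ℤ := fun i p => p.1 + (i : ℤ) * p.2 with hφdef
  have hφ : ∀ i : ℕ, ∀ a b : ℤ × ℤ, φ i (a + b) = φ i a + φ i b := by
    intro i a b
    simp only [hφdef, Prod.fst_add, Prod.snd_add]
    ring
  set C2 : Set (Ultrafilter (ℤ × ℤ)) :=
    {r | ∀ i : ℕ, i ≤ k → Ultrafilter.map (φ i) r = e} with hC2def
  have hC2mem : ∀ r, r ∈ C2 ↔ ∀ i : ℕ, i ≤ k → ∀ s ∈ e, (φ i) ⁻¹' s ∈ r := by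
    intro r
    constructor
    · rintro h i hi s hs
      rw [← h i hi] at hs
      exact hs
    · intro h i hi
      exact FGaux.map_eq_of_forall _ _ _ (h i hi)
  have hC2cl : IsClosed C2 := by
    have hrw : C2 = ⋂ (i : ℕ) (_ : i ≤ k) (s : Set ℤ) (_ : s ∈ e),
        {r : Ultrafilter (ℤ × ℤ) | (φ i) ⁻¹' s ∈ r} := by
      ext r
      simp only [Set.mem_iInter, Set.mem_setOf_eq]
      exact hC2mem r
    rw [hrw]
    exact isClosed_iInter fun i => isClosed_iInter fun _ => isClosed_iInter fun s =>
      isClosed_iInter fun _ => ultrafilter_isClosed_basic _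
  have hC2ne : (Ultrafilter.map (fun a : ℤ => (a, (0 : ℤ))) e) ∈ C2 := by
    intro i hi
    rw [Ultrafilter.map_map]
    have hfun : (φ i ∘ fun a : ℤ => (a, (0 : ℤ))) = id := by
      funext a; simp [hφdef]
    rw [hfun, Ultrafilter.map_id]
  have hC2sub : ∀ r ∈ C2, ∀ r' ∈ C2, r + r' ∈ C2 := by
    intro r hr r' hr' i hi
    rw [FGaux.map_add_hom _ (hφ i), hr i hi, hr' i hi, hee]
  obtain ⟨w, hwC2, hww⟩ := exists_idempotent_in_compact_add_subsemigroup
    Ultrafilter.continuous_add_left C2 ⟨_, hC2ne⟩ hC2cl.isCompact hC2sub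
  have hCid : ∀ r : Ultrafilter (ℤ × ℤ), ∀ p ∈ Set.range (· + w),
      r + p ∈ Set.range (· + w) := by
    rintro r _ ⟨s, rfl⟩; exact ⟨r + s, add_assoc r s w⟩
  have hCcl : IsClosed (Set.range (· + w)) := by
    rw [← Set.image_univ]
    exact (isCompact_univ.image (Ultrafilter.continuous_add_left w)).isClosed
  obtain ⟨M2, hM2C, hM2⟩ := FGaux.exists_minIdeal (Set.range (· + w)) ⟨w + w, ⟨w, rfl⟩⟩ hCcl hCid
  obtain ⟨v', hv'M2, hv'v'⟩ := hM2.exists_idem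
  obtain ⟨r0, hr0⟩ := hM2C hv'M2
  have hr0' : r0 + w = v' := hr0
  have hv'w : v' + w = v' := by rw [← hr0', add_assoc, hww]
  set v := w + v' with hv
  have hvM2 : v ∈ M2 := hM2.ideal hv'M2 w
  have hvw : v + w = v := by rw [hv, add_assoc, hv'w]
  have hwv : w + v = v := by rw [hv, ← add_assoc, hww]
  have hvv : v + v = v := by
    calc v + v = w + ((v' + w) + v') := by rw [hv]; rw [add_assoc, ← add_assoc v' w v']
    _ = w + (v' + v') := by rw [hv'w]
    _ = v := by rw [hv'v']
  have hmapv : ∀ i : ℕ, i ≤ k → Ultrafilter.map (φ i) v = e := by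
    intro i hi
    set u := Ultrafilter.map (φ i) v with hu
    have hue : u + e = u := by
      rw [hu, ← hwC2 i hi, ← FGaux.map_add_hom _ (hφ i), hvw]
    have heu : e + u = u := by
      rw [hu, ← hwC2 i hi, ← FGaux.map_add_hom _ (hφ i), hwv]
    have huu : u + u = u := by
      rw [hu, ← FGaux.map_add_hom _ (hφ i), hvv]
    have huM1 : u ∈ M1 := by
      rw [← hue, ← hM1.2.2 e heM1]
      exact ⟨u, rfl⟩
    have h : e ∈ Set.range (· + u) := by rw [hM1.2.2 u huM1]; exact heM1
    obtain ⟨s, hs⟩ := h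
    have hs' : s + u = e := hs
    have h2 : e + u = e := by rw [← hs', add_assoc, huu]
    rw [← heu, h2]
  have hA2 : {p : ℤ × ℤ | ∀ i : ℕ, i ≤ k → φ i p ∈ S'} ∈ v := by
    have hrw : {p : ℤ × ℤ | ∀ i : ℕ, i ≤ k → φ i p ∈ S'}
        = ⋂ i ∈ Finset.range (k + 1), (φ i) ⁻¹' S' := by
      ext p
      simp [Nat.lt_succ_iff]
    rw [hrw, ← Ultrafilter.mem_coe]
    refine (Filter.biInter_finset_mem _).2 fun i hi => ?_
    have hmap := hmapv i (Nat.lt_succ_iff.1 (Finset.mem_range.1 hi))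
    rw [Ultrafilter.mem_coe]
    have : S' ∈ Ultrafilter.map (φ i) v := by rw [hmap]; exact hxe
    exact this
  have hPW2 := FGaux.pws_of_min hM2 hvM2 hA2
  obtain ⟨F2, hF2⟩ := hPW2
  refine ⟨F2.image (· + (x, (0 : ℤ))), fun E => ?_⟩
  obtain ⟨g, hg⟩ := hF2 E
  refine ⟨g, fun f hf => ?_⟩
  obtain ⟨t, htF2, ht⟩ := hg f hf
  refine ⟨t + (x, 0), Finset.mem_image_of_mem _ htF2, ?_⟩
  intro i hi
  have h2 := ht i hi
  have h3 : x + φ i (g + f + t) ∈ S := h2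
  show (g + f + (t + (x, 0))).1 + (i : ℤ) * (g + f + (t + (x, 0))).2 ∈ S
  have heq : (g + f + (t + (x, 0))).1 + (i : ℤ) * (g + f + (t + (x, 0))).2
      = x + φ i (g + f + t) := by
    simp only [hφdef, Prod.fst_add, Prod.snd_add]
    ring
  rw [heq]
  exact h3
end

section
/- Suppose S ⊆ ℤ and r ∈ ℕ are such that T := ⋃_{t=1}^r (S - t) is thick, and let k ∈ ℕ. Let K ∈ ℕ be such that every r-coloring of any (K+1)-term arithmetic progression with nonzero common difference admits a monochromatic (k+1)-term arithmetic progression. Then for every (A, D) ∈ ℤ² with D ≠ 0 and A + iD ∈ T for all i = 0, ..., K, there exist α ∈ {0, ..., K}, δ ∈ {1, ..., K}, and t ∈ {1, ..., r} such that (A + αD) + i·(δD) ∈ S - t for all i = 0, ..., k. -/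
/-- Extraction of a monochromatic sub-progression landing in a single translate S - t. -/
theorem subprogression_in_translate (S : Set ℤ) (r : ℕ) (hr : 0 < r) (k K : ℕ)
    (hK : ∀ c : ℤ → Fin r, ∀ A D : ℤ, D ≠ 0 →
      ∃ α δ : ℕ, α ≤ K ∧ 1 ≤ δ ∧ δ ≤ K ∧ α + k * δ ≤ K ∧
        ∀ i j : ℕ, i ≤ k → j ≤ k →
          c (A + ((α : ℤ) + (i : ℤ) * δ) * D) = c (A + ((α : ℤ) + (j : ℤ) * δ) * D))
    (A D : ℤ) (hD : D ≠ 0)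
    (hAD : ∀ i : ℕ, i ≤ K → ∃ t : ℤ, 1 ≤ t ∧ t ≤ (r : ℤ) ∧ (A + (i : ℤ) * D) + t ∈ S) :
    ∃ α δ : ℕ, ∃ t : ℤ, α ≤ K ∧ 1 ≤ δ ∧ δ ≤ K ∧ 1 ≤ t ∧ t ≤ (r : ℤ) ∧
      ∀ i : ℕ, i ≤ k → ((A + (α : ℤ) * D) + (i : ℤ) * ((δ : ℤ) * D)) + t ∈ S := by
  classical
  set P : ℤ → Prop := fun x => ∃ t : ℤ, 1 ≤ t ∧ t ≤ (r : ℤ) ∧ x + t ∈ S with hP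
  have hbound : ∀ x (h : P x), ((h.choose - 1).toNat) < r := by
    intro x h
    have h1 := h.choose_spec.1
    have h2 := h.choose_spec.2.1
    omega
  set c : ℤ → Fin r := fun x =>
    if h : P x then ⟨(h.choose - 1).toNat, hbound x h⟩ else ⟨0, hr⟩ with hc
  have hcmem : ∀ x (h : P x), x + ((c x : ℤ) + 1) ∈ S ∧ 1 ≤ ((c x : ℤ) + 1) ∧
      ((c x : ℤ) + 1) ≤ (r : ℤ) := by
    intro x h
    have h1 := h.choose_spec.1
    have h2 := h.choose_spec.2.1
    have h3 := h.choose_spec.2.2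
    simp only [hc, dif_pos h]
    have heq : ((Exists.choose h - 1).toNat : ℤ) = h.choose - 1 := by omega
    refine ⟨?_, by omega, by omega⟩
    rw [heq, sub_add_cancel]
    exact h3
  obtain ⟨α, δ, hα, hδ1, hδK, hsum, hmono⟩ := hK c A D hD
  have hPall : ∀ i : ℕ, i ≤ k → P (A + ((α : ℤ) + (i : ℤ) * δ) * D) := by
    intro i hi
    have hle : α + i * δ ≤ K := by
      have : i * δ ≤ k * δ := Nat.mul_le_mul_right δ hi
      omega
    obtain ⟨t, ht1, ht2, ht3⟩ := hAD (α + i * δ) hle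
    refine ⟨t, ht1, ht2, ?_⟩
    have : ((α + i * δ : ℕ) : ℤ) = (α : ℤ) + (i : ℤ) * δ := by push_cast; ring
    rwa [this] at ht3
  set x0 := A + ((α : ℤ) + (0 : ℤ) * δ) * D
  refine ⟨α, δ, (c x0 : ℤ) + 1, hα, hδ1, hδK, (hcmem x0 (hPall 0 (Nat.zero_le k))).2.1,
    (hcmem x0 (hPall 0 (Nat.zero_le k))).2.2, ?_⟩
  intro i hi
  have hceq : c (A + ((α : ℤ) + (i : ℤ) * δ) * D) = c x0 := hmono i 0 hi (Nat.zero_le k)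
  have := (hcmem _ (hPall i hi)).1
  rw [hceq] at this
  have hxe : A + ((α : ℤ) + (i : ℤ) * δ) * D = (A + (α : ℤ) * D) + (i : ℤ) * ((δ : ℤ) * D) := by
    ring
  rwa [hxe] at this
end

section
/- For every finite partition ℤ = C₁ ∪ ... ∪ C_r, at least one cell C_j is piecewise syndetic; consequently, by the fact that piecewise syndetic sets contain arbitrarily long arithmetic progressions, one cell contains arbitrarily long arithmetic progressions (van der Waerden's theorem). -/
lemma thickZ_nonempty {T : Set ℤ} (h : ThickZ T) : T.Nonempty := by
  obtain ⟨a, ha⟩ := h 1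
  exact ⟨a, ha a le_rfl (by norm_num)⟩

lemma pwSynZ_union {S A B : Set ℤ} (hS : PWSynZ S) (hsub : S ⊆ A ∪ B) :
    PWSynZ A ∨ PWSynZ B := by
  by_cases hA : PWSynZ A
  · exact Or.inl hA
  right
  obtain ⟨m, hm, hthick⟩ := hS
  have hnA : ¬ ThickZ {x : ℤ | ∃ t : ℤ, 1 ≤ t ∧ t ≤ (m : ℤ) ∧ x + t ∈ A} :=
    fun h => hA ⟨m, hm, h⟩
  rw [ThickZ] at hnA
  push_neg at hnA
  obtain ⟨L₀, hL₀⟩ := hnA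
  refine ⟨L₀ + m, by omega, ?_⟩
  intro L
  obtain ⟨y, hy⟩ := hthick (L + L₀)
  refine ⟨y, fun i hi1 hi2 => ?_⟩
  obtain ⟨x, hx1, hx2, hx3⟩ := hL₀ i
  simp only [Set.mem_setOf_eq] at hx3
  push_neg at hx3
  have hxT := hy x (le_trans hi1 hx1) (by push_cast at hx2 hi2 ⊢; omega)
  obtain ⟨t, ht1, ht2, htS⟩ := hxT
  have hB : x + t ∈ B := (hsub htS).resolve_left (hx3 t ht1 ht2)
  exact ⟨x - i + t, by omega, by push_cast at hx2 ⊢; omega,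
    by rwa [show i + (x - i + t) = x + t by ring]⟩

lemma pwSynZ_of_cover : ∀ (n : ℕ) (A : Fin n → Set ℤ) (S : Set ℤ), PWSynZ S →
    S ⊆ (⋃ j, A j) → ∃ j, PWSynZ (A j) := by
  intro n
  induction n with
  | zero =>
    intro A S hS hsub
    obtain ⟨m, hm, ht⟩ := hS
    obtain ⟨x, hx⟩ := thickZ_nonempty ht
    obtain ⟨t, _, _, hxS⟩ := hx
    obtain ⟨j, -⟩ := Set.mem_iUnion.mp (hsub hxS)
    exact j.elim0
  | succ n ih =>
    intro A S hS hsub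
    have hsub' : S ⊆ (⋃ j : Fin n, A j.castSucc) ∪ A (Fin.last n) := by
      intro x hx
      obtain ⟨j, hj⟩ := Set.mem_iUnion.mp (hsub hx)
      rcases Fin.eq_castSucc_or_eq_last j with ⟨j', rfl⟩ | rfl
      · exact Or.inl (Set.mem_iUnion.mpr ⟨j', hj⟩)
      · exact Or.inr hj
    rcases pwSynZ_union hS hsub' with h | h
    · obtain ⟨j, hj⟩ := ih _ _ h (subset_refl _)
      exact ⟨j.castSucc, hj⟩
    · exact ⟨Fin.last n, h⟩

lemma ultra_const {α : Type*} [Finite α] (U : Ultrafilter ℕ) (f : ℕ → α) :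
    ∃ c, ∀ᶠ N in (U : Filter ℕ), f N = c := by
  have h : (⋃ c ∈ (Set.univ : Set α), {N | f N = c}) ∈ U := by
    have : (⋃ c ∈ (Set.univ : Set α), {N | f N = c}) = Set.univ := by
      ext N; simp
    rw [this]; exact Filter.univ_mem
  obtain ⟨c, -, hc⟩ := (Ultrafilter.finite_biUnion_mem_iff Set.finite_univ).mp h
  exact ⟨c, hc⟩

lemma pwSynZ_ap {S : Set ℤ} (hS : PWSynZ S) (k : ℕ) :
    ∃ a d : ℤ, d ≠ 0 ∧ ∀ i : ℕ, i ≤ k → a + (i : ℤ) * d ∈ S := by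
  classical
  obtain ⟨m, hm, hthick⟩ := hS
  choose A hA using hthick
  set b : ℕ → ℤ := fun N => A (2 * N + 1) + N with hb
  have hbmem : ∀ (N : ℕ) (x : ℤ), -(N : ℤ) ≤ x → x ≤ N →
      ∃ t : ℤ, 1 ≤ t ∧ t ≤ (m : ℤ) ∧ (b N + x) + t ∈ S := by
    intro N x hx1 hx2
    have := hA (2 * N + 1) (b N + x) (by rw [hb]; push_cast; omega)
      (by rw [hb]; push_cast; omega)
    exact this
  set F : ℕ → ℤ → Fin m := fun N x =>
    if h : ∃ t : ℤ, 1 ≤ t ∧ t ≤ (m : ℤ) ∧ (b N + x) + t ∈ S then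
      ⟨(h.choose - 1).toNat, by
        obtain ⟨h1, h2, -⟩ := h.choose_spec
        omega⟩
    else ⟨0, hm⟩ with hF
  set U := Filter.hyperfilter ℕ with hU
  have hχ : ∀ x : ℤ, ∃ c : Fin m, ∀ᶠ N in (U : Filter ℕ), F N x = c :=
    fun x => ultra_const U (fun N => F N x)
  choose χ hχ using hχ
  obtain ⟨a, ha, bb, c, hac⟩ := Combinatorics.exists_mono_homothetic_copy
    ((Finset.range (k + 1)).image (Nat.cast : ℕ → ℤ)) χ
  have key : ∀ᶠ N in (U : Filter ℕ),
      ∀ i ∈ Finset.range (k + 1), F N (a • (i : ℤ) + bb) = c := by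
    refine (Filter.eventually_all_finset _).mpr fun i hi => ?_
    have h1 := hχ (a • (i : ℤ) + bb)
    rwa [hac _ (Finset.mem_image.mpr ⟨i, hi, rfl⟩)] at h1
  have hsize : ∀ᶠ N : ℕ in (U : Filter ℕ), ∀ i ∈ Finset.range (k + 1),
      -(N : ℤ) ≤ a • (i : ℤ) + bb ∧ a • (i : ℤ) + bb ≤ N := by
    refine (Filter.eventually_all_finset _).mpr fun i hi => ?_
    have h2 : ∀ᶠ N in Filter.atTop, (a • (i : ℤ) + bb).natAbs ≤ N :=
      Filter.eventually_ge_atTop _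
    exact (h2.filter_mono Nat.hyperfilter_le_atTop).mono (fun N hN => by omega)
  obtain ⟨N, hN1, hN2⟩ := (key.and hsize).exists
  refine ⟨b N + bb + (((c : ℕ) : ℤ) + 1), (a : ℤ), by positivity, ?_⟩
  intro i hik
  have hib : i ∈ Finset.range (k + 1) := Finset.mem_range.mpr (by omega)
  obtain ⟨hbd1, hbd2⟩ := hN2 i hib
  have hcond : ∃ t : ℤ, 1 ≤ t ∧ t ≤ (m : ℤ) ∧ (b N + (a • (i : ℤ) + bb)) + t ∈ S :=
    hbmem N _ hbd1 hbd2
  have hFval := hN1 i hib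
  simp only [hF] at hFval
  rw [dif_pos hcond] at hFval
  have hv : (hcond.choose - 1).toNat = (c : ℕ) := congrArg Fin.val hFval
  obtain ⟨ht1, ht2, ht3⟩ := hcond.choose_spec
  have hts : hcond.choose = ((c : ℕ) : ℤ) + 1 := by omega
  rw [hts] at ht3
  have heq : b N + bb + (((c : ℕ) : ℤ) + 1) + (i : ℤ) * (a : ℤ)
      = (b N + (a • (i : ℤ) + bb)) + (((c : ℕ) : ℤ) + 1) := by
    rw [nsmul_eq_mul]; ring
  rw [heq]
  exact ht3

/-- For every finite partition of ℤ some cell is piecewise syndetic and hence contains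
arbitrarily long arithmetic progressions (van der Waerden's theorem). -/
theorem partition_pwSyn_vdW (r : ℕ) (C : Fin r → Set ℤ) (hcover : ∀ x : ℤ, ∃ j, x ∈ C j) :
    ∃ j, PWSynZ (C j) ∧ ∀ k : ℕ, ∃ a d : ℤ, d ≠ 0 ∧ ∀ i : ℕ, i ≤ k →
      a + (i : ℤ) * d ∈ C j := by
  have hZ : PWSynZ (Set.univ : Set ℤ) :=
    ⟨1, one_pos, fun L => ⟨0, fun i _ _ => ⟨1, le_refl _, by norm_num, Set.mem_univ _⟩⟩⟩
  have hsub : (Set.univ : Set ℤ) ⊆ ⋃ j, C j := fun x _ => Set.mem_iUnion.mpr (hcover x)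
  obtain ⟨j, hj⟩ := pwSynZ_of_cover r C _ hZ hsub
  exact ⟨j, hj, fun k => pwSynZ_ap hj k⟩
end

section
/- Let k ∈ ℕ and let S ⊆ ℤ be piecewise syndetic. Then the set {(a, d) ∈ ℤ² : d ≠ 0 and a, a+d, ..., a+kd ∈ S} is nonempty. -/
open Filter

theorem Ultrafilter.exists_eventually_eq_of_finite {α β : Type*} [Finite β] (U : Ultrafilter α)
    (f : α → β) : ∃ b, ∀ᶠ x in (U : Filter α), f x = b := by
  obtain ⟨b, hb⟩ := (U.map f).eq_pure_of_finite
  exact ⟨b, show {b} ∈ U.map f by rw [hb]; rfl⟩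

theorem exists_mono_arithProgression_lt (k : ℕ) (κ : Type*) [Finite κ] :
    ∃ N : ℕ, ∀ C : ℕ → κ, ∃ b d : ℕ, 0 < d ∧ b + k * d < N ∧
      ∀ i ≤ k, C (b + i * d) = C b := by
  by_contra! hbad
  choose C hC using hbad
  let U : Ultrafilter ℕ := .of atTop
  -- `c` is the `U`-limit of the counterexample colourings `C N`
  choose c hc using fun n => U.exists_eventually_eq_of_finite (C · n)
  obtain ⟨d, hd, b, c₀, hmono⟩ :=
    Combinatorics.exists_mono_homothetic_copy (Finset.range (k + 1)) c
  have hc_prog : ∀ i ≤ k, c (b + i * d) = c₀ := fun i hi => by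
    simpa [mul_comm, add_comm] using hmono i (Finset.mem_range.2 (Nat.lt_succ_of_le hi))
  have hU : ∀ᶠ N in (U : Filter ℕ), b + k * d < N ∧ ∀ i ∈ Finset.range (k + 1),
      C N (b + i * d) = c (b + i * d) :=
    ((eventually_gt_atTop _).filter_mono (Ultrafilter.of_le atTop)).and
      ((eventually_all_finset _).2 fun i _ => hc _)
  obtain ⟨N, hN, hCN⟩ := hU.exists
  have hCN_prog : ∀ i ≤ k, C N (b + i * d) = c₀ := fun i hi => by
    rw [hCN i (Finset.mem_range.2 (Nat.lt_succ_of_le hi)), hc_prog i hi]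
  obtain ⟨i, hi, hne⟩ := hC N b d hd hN
  exact hne (by simpa using (hCN_prog i hi).trans (hCN_prog 0 k.zero_le).symm)

theorem ThickZ.exists_mono_arithProgression {T : Set ℤ} (hT : ThickZ T) (k : ℕ) {κ : Type*}
    [Finite κ] (C : ℤ → κ) :
    ∃ a d : ℤ, d ≠ 0 ∧ ∀ i ≤ k, a + i * d ∈ T ∧ C (a + i * d) = C a := by
  obtain ⟨N, hN⟩ := exists_mono_arithProgression_lt k κ
  obtain ⟨a, ha⟩ := hT N
  obtain ⟨b, d, hd, hlt, hmono⟩ := hN fun n => C (a + n)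
  refine ⟨a + b, d, by positivity, fun i hi => ⟨ha _ ?_ ?_, ?_⟩⟩
  · have : 0 ≤ (i : ℤ) * d := by positivity
    omega
  · have : (i : ℤ) * d ≤ k * d := by exact_mod_cast Nat.mul_le_mul_right d hi
    have : (b : ℤ) + k * d < N := by exact_mod_cast hlt
    omega
  · simpa [add_assoc] using hmono i hi

/-- Van der Waerden's theorem, reformulated: for piecewise syndetic S ⊆ ℤ the set of
pairs (a, d) with d ≠ 0 and a, a+d, ..., a+kd ∈ S is nonempty. -/
theorem progressionPairs_nonempty (k : ℕ) (S : Set ℤ) (hS : PWSynZ S) :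
    Set.Nonempty {p : ℤ × ℤ | p.2 ≠ 0 ∧ ∀ i : ℕ, i ≤ k → p.1 + (i : ℤ) * p.2 ∈ S} := by
  obtain ⟨r, hr, hT⟩ := hS
  set T := {x : ℤ | ∃ t : ℤ, 1 ≤ t ∧ t ≤ (r : ℤ) ∧ x + t ∈ S}
  have hshift (x : ℤ) : ∃ t : Set.Icc (1 : ℤ) r, x ∈ T → x + t ∈ S := by
    by_cases hx : x ∈ T
    · obtain ⟨t, h1, h2, ht⟩ := hx
      exact ⟨⟨t, h1, h2⟩, fun _ => ht⟩
    · exact ⟨⟨1, le_rfl, by omega⟩, hx.elim⟩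
  choose t ht using hshift
  obtain ⟨a, d, hd, hprog⟩ := hT.exists_mono_arithProgression k t
  refine ⟨(a + t a, d), hd, fun i hi => ?_⟩
  obtain ⟨hmem, hcol⟩ := hprog i hi
  have hS_mem := ht _ hmem
  rw [hcol] at hS_mem
  convert hS_mem using 1
  ring
end

section
/- Let G be a countable abelian group. If T ⊆ G is thick and φ : T → C is a coloring with C finite, then some color class φ⁻¹(c) is piecewise syndetic in G. -/
open Pointwise

/-!
A thick set is piecewise syndetic and is the union of its finitely many colour classes, so it
suffices that piecewise syndeticity is partition regular. If `S ∪ S'` is piecewise syndetic via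
the shifts `F` and `S'` is not, there is a finite `E` such that every `g` has some `e ∈ E` with
`g + e + F` disjoint from `S'`; a translate of `K + E` inside the thick set witnessing `S ∪ S'`
then shows that `S`, shifted by `E + F`, contains a translate of `K`.
-/

namespace PWSyn

variable {G : Type*} [AddCommGroup G]

theorem _root_.Thick.pwSyn {T : Set G} (hT : Thick T) : PWSyn T :=
  ⟨{0}, fun F => (hT F).imp fun _ hg f hf => ⟨0, Finset.mem_singleton_self 0, by
    simpa using hg f hf⟩⟩

theorem mono {S S' : Set G} (h : PWSyn S) (hSS' : S ⊆ S') : PWSyn S' := by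
  obtain ⟨F, hF⟩ := h
  exact ⟨F, fun K => (hF K).imp fun _ hg k hk =>
    (hg k hk).imp fun _ ⟨ht, hmem⟩ => ⟨ht, hSS' hmem⟩⟩

theorem not_pwSyn_empty : ¬ PWSyn (∅ : Set G) := by
  rintro ⟨F, hF⟩
  obtain ⟨g, hg⟩ := hF {0}
  obtain ⟨t, -, hmem⟩ := hg 0 (Finset.mem_singleton_self 0)
  exact hmem

theorem of_union_of_not_pwSyn {S S' : Set G} (h : PWSyn (S ∪ S')) (h' : ¬ PWSyn S') :
    PWSyn S := by
  classical
  obtain ⟨F, hF⟩ := h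
  obtain ⟨E, hE⟩ : ∃ E : Finset G, ∀ g, ∃ e ∈ E, ∀ t ∈ F, g + e + t ∉ S' := by
    simp only [PWSyn, Thick, not_exists, not_forall] at h'
    simpa [add_assoc] using h' F
  refine ⟨E + F, fun K => ?_⟩
  obtain ⟨g, hg⟩ := hF (K + E)
  refine ⟨g, fun k hk => ?_⟩
  obtain ⟨e, he, hS'⟩ := hE (g + k)
  obtain ⟨t, ht, hmem⟩ := hg (k + e) (Finset.add_mem_add hk he)
  have hmem : g + k + e + t ∈ S ∪ S' := by simpa only [add_assoc] using hmem
  exact ⟨e + t, Finset.add_mem_add he ht, by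
    simpa only [add_assoc] using hmem.resolve_right (hS' t ht)⟩

theorem or_of_union {S S' : Set G} (h : PWSyn (S ∪ S')) : PWSyn S ∨ PWSyn S' :=
  or_iff_not_imp_right.2 h.of_union_of_not_pwSyn

theorem exists_of_biUnion {ι : Type*} {A : ι → Set G} {s : Finset ι}
    (h : PWSyn (⋃ i ∈ s, A i)) : ∃ i ∈ s, PWSyn (A i) := by
  classical
  induction s using Finset.induction_on with
  | empty => exact (not_pwSyn_empty (by simpa using h)).elim
  | insert a s _ ih =>
    rw [Finset.set_biUnion_insert] at h
    rcases h.or_of_union with ha | hs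
    · exact ⟨a, Finset.mem_insert_self a s, ha⟩
    · obtain ⟨i, hi, hAi⟩ := ih hs
      exact ⟨i, Finset.mem_insert_of_mem hi, hAi⟩

theorem exists_of_iUnion {ι : Type*} [Finite ι] {A : ι → Set G} (h : PWSyn (⋃ i, A i)) :
    ∃ i, PWSyn (A i) := by
  have := Fintype.ofFinite ι
  obtain ⟨i, -, hi⟩ := exists_of_biUnion (A := A) (s := Finset.univ) (by simpa using h)
  exact ⟨i, hi⟩

end PWSyn

theorem thick_coloring_pwSyn_general {G : Type*} [AddCommGroup G]
    (T : Set G) (hT : Thick T) {C : Type*} [Finite C] (φ : T → C) :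
    ∃ c : C, PWSyn {x : G | ∃ h : x ∈ T, φ ⟨x, h⟩ = c} := by
  have hcover : T ⊆ ⋃ c, {x : G | ∃ h : x ∈ T, φ ⟨x, h⟩ = c} :=
    fun x hx => Set.mem_iUnion.2 ⟨φ ⟨x, hx⟩, hx, rfl⟩
  exact (hT.pwSyn.mono hcover).exists_of_iUnion

/-- In a countable abelian group, any finite coloring of a thick set has a piecewise
syndetic color class. -/
theorem thick_coloring_pwSyn {G : Type*} [AddCommGroup G] [Countable G]
    (T : Set G) (hT : Thick T) {C : Type*} [Finite C] (φ : T → C) :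
    ∃ c : C, PWSyn {x : G | ∃ h : x ∈ T, φ ⟨x, h⟩ = c} :=
  thick_coloring_pwSyn_general T hT φ
end
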